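/- Let q be a real number, n ≥ 1 and r ≥ 1 integers, f : ℝ → ℝ twice continuously differentiable, and x a real number with 1+(q-1)x ≠ 0. Then (Dₙ(D_{n+r}f) - D_{n+r}(Dₙf))(x) = r·(D_{2n+r}f)(x) + (q-1)·r·(D_{2n+r-1}f)(x). -/

import Mathlib

/-!
Every `Dₙ` is a first-order operator `f ↦ wₙ · f'` with coefficient `wₙ = g^(n-1) · (1 + (x-1)q) x`,
so the second derivatives of `f` cancel in the commutator and `[Dₙ, Dₘ] f = (wₙ wₘ' - wₘ wₙ') f'`.
Since `wₙ₊ᵣ = gʳ wₙ`, this Wronskian is `r g^(r-1) g' wₙ²`, and the whole computation reduces to the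
identity `(1 + (x-1)q) x g' = g² + (q-1) g` for `g = g_q`.
-/

/-- The q-rational transition map. -/
noncomputable def gq (q x : ℝ) : ℝ := (1 + (x - 1) * q) / (1 + (q - 1) * x)

/-- The deformed Witt operators `Dₙ f = g_q^{n-1}·(1+(x-1)q)·x·f'` for `n ≥ 1`. -/
noncomputable def DWpos (q : ℝ) (n : ℕ) (f : ℝ → ℝ) (x : ℝ) : ℝ :=
  gq q x ^ (n - 1) * ((1 + (x - 1) * q) * x * deriv f x)

section FirstOrderOperators

variable {u v g f : ℝ → ℝ} {x : ℝ}

theorem mul_deriv_mul_deriv_sub (hu : DifferentiableAt ℝ u x) (hv : DifferentiableAt ℝ v x)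
    (hf : DifferentiableAt ℝ (deriv f) x) :
    u x * deriv (fun y => v y * deriv f y) x - v x * deriv (fun y => u y * deriv f y) x
      = (u x * deriv v x - v x * deriv u x) * deriv f x := by
  rw [deriv_fun_mul hv hf, deriv_fun_mul hu hf]
  ring

theorem mul_deriv_pow_mul_sub (hg : DifferentiableAt ℝ g x) (hu : DifferentiableAt ℝ u x)
    (k : ℕ) :
    u x * deriv (fun y => g y ^ k * u y) x - g x ^ k * u x * deriv u x
      = k * g x ^ (k - 1) * deriv g x * u x ^ 2 := by
  rw [deriv_fun_mul (hg.fun_pow k) hu, deriv_fun_pow hg]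
  ring

end FirstOrderOperators

section DeformedWitt

variable {q x : ℝ}

theorem hasDerivAt_gq (hx : 1 + (q - 1) * x ≠ 0) :
    HasDerivAt (gq q) ((q ^ 2 - q + 1) / (1 + (q - 1) * x) ^ 2) x := by
  have hA : HasDerivAt (fun y : ℝ => 1 + (y - 1) * q) q x := by
    simpa using (((hasDerivAt_id x).sub_const 1).mul_const q).const_add 1
  have hB : HasDerivAt (fun y : ℝ => 1 + (q - 1) * y) (q - 1) x := by
    simpa using ((hasDerivAt_id x).const_mul (q - 1)).const_add 1
  refine (hA.fun_div hB hx).congr_deriv ?_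
  field_simp
  ring

theorem mul_deriv_gq (hx : 1 + (q - 1) * x ≠ 0) :
    (1 + (x - 1) * q) * x * deriv (gq q) x = gq q x ^ 2 + (q - 1) * gq q x := by
  rw [(hasDerivAt_gq hx).deriv, gq]
  field_simp
  ring

noncomputable def wittCoeff (q : ℝ) (n : ℕ) (x : ℝ) : ℝ :=
  gq q x ^ (n - 1) * ((1 + (x - 1) * q) * x)

theorem DWpos_eq_wittCoeff_mul_deriv (n : ℕ) (f : ℝ → ℝ) :
    DWpos q n f x = wittCoeff q n x * deriv f x := by
  rw [DWpos, wittCoeff]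
  ring

theorem wittCoeff_succ (k : ℕ) :
    wittCoeff q (k + 1) x = gq q x ^ k * ((1 + (x - 1) * q) * x) := rfl

theorem wittCoeff_succ_add (k r : ℕ) :
    wittCoeff q (k + 1 + r) = fun y => gq q y ^ r * wittCoeff q (k + 1) y := by
  funext y
  rw [show k + 1 + r = k + r + 1 by omega, wittCoeff_succ, wittCoeff_succ]
  ring

theorem differentiableAt_wittCoeff (n : ℕ) (hx : 1 + (q - 1) * x ≠ 0) :
    DifferentiableAt ℝ (wittCoeff q n) x :=
  ((hasDerivAt_gq hx).differentiableAt.fun_pow _).fun_mul (by fun_prop)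

theorem wittCoeff_bracket {n : ℕ} (hn : 1 ≤ n) (r : ℕ) (hx : 1 + (q - 1) * x ≠ 0) :
    wittCoeff q n x * deriv (wittCoeff q (n + r)) x
        - wittCoeff q (n + r) x * deriv (wittCoeff q n) x
      = r * wittCoeff q (2 * n + r) x + (q - 1) * r * wittCoeff q (2 * n + r - 1) x := by
  obtain ⟨k, rfl⟩ : ∃ k, n = k + 1 := ⟨n - 1, by omega⟩
  have hg := (hasDerivAt_gq hx).differentiableAt
  have hw := differentiableAt_wittCoeff (k + 1) hx
  rw [wittCoeff_succ_add, mul_deriv_pow_mul_sub hg hw]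
  rcases r with _ | s
  · simp
  · rw [show 2 * (k + 1) + (s + 1) - 1 = 2 * k + s + 1 + 1 by omega,
      show 2 * (k + 1) + (s + 1) = 2 * k + s + 2 + 1 by omega, Nat.add_sub_cancel,
      wittCoeff_succ, wittCoeff_succ, wittCoeff_succ]
    push_cast
    linear_combination ((s : ℝ) + 1) * gq q x ^ (2 * k + s) * ((1 + (x - 1) * q) * x)
      * mul_deriv_gq hx

end DeformedWitt

theorem deformed_witt_Dn_Dnr_general (q : ℝ) (n r : ℕ) (hn : 1 ≤ n)
    (f : ℝ → ℝ) (hf : ContDiff ℝ 2 f) (x : ℝ) (hx : 1 + (q - 1) * x ≠ 0) :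
    DWpos q n (fun y => DWpos q (n + r) f y) x
        - DWpos q (n + r) (fun y => DWpos q n f y) x
      = (r : ℝ) * DWpos q (2 * n + r) f x
        + (q - 1) * (r : ℝ) * DWpos q (2 * n + r - 1) f x := by
  simp only [DWpos_eq_wittCoeff_mul_deriv]
  rw [mul_deriv_mul_deriv_sub (differentiableAt_wittCoeff n hx)
    (differentiableAt_wittCoeff (n + r) hx) (hf.differentiable_deriv_two x),
    wittCoeff_bracket hn r hx]
  ring

/-- The deformed Witt bracket `[Dₙ, Dₙ₊ᵣ] = r·D₂ₙ₊ᵣ + (q-1)·r·D₂ₙ₊ᵣ₋₁`. -/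
theorem deformed_witt_Dn_Dnr (q : ℝ) (n r : ℕ) (hn : 1 ≤ n) (hr : 1 ≤ r)
    (f : ℝ → ℝ) (hf : ContDiff ℝ 2 f) (x : ℝ) (hx : 1 + (q - 1) * x ≠ 0) :
    DWpos q n (fun y => DWpos q (n + r) f y) x
        - DWpos q (n + r) (fun y => DWpos q n f y) x
      = (r : ℝ) * DWpos q (2 * n + r) f x
        + (q - 1) * (r : ℝ) * DWpos q (2 * n + r - 1) f x :=
  deformed_witt_Dn_Dnr_general q n r hn f hf x hx
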